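/- arXiv:1010.5303 — 4 statements merged into one kernel-verified Lean document; each statement's English description precedes it below -/
import Mathlib

section
/- Let E be a k-dimensional doubly even binary code of length 8n. Then the extended doubling 𝒟(E) = Span{d(E), ℓ(1^{8n})} is a (k+1)-dimensional triply even binary code of length 16n. -/
open Module

/-- Hamming weight of a binary word. -/
def wt {N : ℕ} (c : Fin N → ZMod 2) : ℕ := (Finset.univ.filter fun i => c i ≠ 0).card

/-- The doubling map d(a₁,...,a_N) = (a₁,a₁,...,a_N,a_N). -/
def dmap {N : ℕ} (a : Fin N → ZMod 2) : Fin (2 * N) → ZMod 2 :=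
  fun j => a ⟨j.val / 2, by have := j.isLt; omega⟩

/-- The vector ℓ(1^N) = (1,0,1,0,...,1,0). -/
def ellOne (N : ℕ) : Fin (2 * N) → ZMod 2 := fun j => if j.val % 2 = 0 then 1 else 0

/-- The extended doubling 𝒟(E) of a binary code E. -/
def ExtDoubling {N : ℕ} (E : Submodule (ZMod 2) (Fin N → ZMod 2)) :
    Submodule (ZMod 2) (Fin (2 * N) → ZMod 2) :=
  Submodule.span (ZMod 2) (insert (ellOne N) (dmap '' (E : Set (Fin N → ZMod 2))))

def DoublyEven {N : ℕ} (E : Submodule (ZMod 2) (Fin N → ZMod 2)) : Prop :=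
  ∀ c ∈ E, 4 ∣ wt c

def TriplyEven {N : ℕ} (E : Submodule (ZMod 2) (Fin N → ZMod 2)) : Prop :=
  ∀ c ∈ E, 8 ∣ wt c

/-! Auxiliary material -/

/-- The doubling map as a linear map. -/
def Dlin (N : ℕ) : (Fin N → ZMod 2) →ₗ[ZMod 2] (Fin (2 * N) → ZMod 2) where
  toFun := dmap
  map_add' a b := by funext j; simp [dmap]
  map_smul' c a := by funext j; simp [dmap]

lemma dmap_injective (N : ℕ) : Function.Injective (dmap (N := N)) := by
  intro a b h
  funext i
  have h2 : (2 * i.val) < 2 * N := by omega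
  have := congrFun h ⟨2 * i.val, h2⟩
  simpa [dmap, Nat.mul_div_cancel_left _ (by norm_num : 0 < 2), Fin.ext_iff] using this

def pairEquiv (N : ℕ) : Fin N × Fin 2 ≃ Fin (2 * N) where
  toFun p := ⟨2 * p.1.val + p.2.val, by have := p.1.isLt; have := p.2.isLt; omega⟩
  invFun j := (⟨j.val / 2, by have := j.isLt; omega⟩, ⟨j.val % 2, by omega⟩)
  left_inv p := by
    have := p.2.isLt
    apply Prod.ext <;> apply Fin.ext <;> simp <;> omega
  right_inv j := by apply Fin.ext; simp; omega

lemma wt_eq_sum {N : ℕ} (c : Fin (2 * N) → ZMod 2) :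
    wt c = ∑ i : Fin N,
      ((if c (pairEquiv N (i, 0)) ≠ 0 then 1 else 0)
        + (if c (pairEquiv N (i, 1)) ≠ 0 then 1 else 0)) := by
  rw [wt, Finset.card_filter]
  rw [← Equiv.sum_comp (pairEquiv N) (fun j => if c j ≠ 0 then (1:ℕ) else 0)]
  rw [Fintype.sum_prod_type]
  simp [Fin.sum_univ_two]

lemma zmod2_cases (c : ZMod 2) : c = 0 ∨ c = 1 := by revert c; decide

lemma wt_dmap {N : ℕ} (a : Fin N → ZMod 2) : wt (dmap a) = 2 * wt a := by
  rw [wt_eq_sum]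
  have key : ∀ (i : Fin N) (b : Fin 2), dmap a (pairEquiv N (i, b)) = a i := by
    intro i b
    have hb := b.isLt
    simp only [dmap, pairEquiv, Equiv.coe_fn_mk]
    congr 1
    apply Fin.ext
    simp
    omega
  simp only [key]
  rw [wt, Finset.card_filter, Finset.mul_sum]
  apply Finset.sum_congr rfl
  intro i _
  by_cases h : a i = 0 <;> simp [h]

lemma wt_ell_add_dmap {N : ℕ} (a : Fin N → ZMod 2) : wt (ellOne N + dmap a) = N := by
  rw [wt_eq_sum]
  have h0 : ∀ i : Fin N, (ellOne N + dmap a) (pairEquiv N (i, 0)) = 1 + a i := by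
    intro i
    simp only [Pi.add_apply, ellOne, dmap, pairEquiv, Equiv.coe_fn_mk]
    have : (2 * i.val + (0:Fin 2).val) % 2 = 0 := by simp
    rw [if_pos this]
    congr 1
    apply Fin.ext
    simp
  have h1 : ∀ i : Fin N, (ellOne N + dmap a) (pairEquiv N (i, 1)) = a i := by
    intro i
    simp only [Pi.add_apply, ellOne, dmap, pairEquiv, Equiv.coe_fn_mk]
    have : ¬ ((2 * i.val + (1:Fin 2).val) % 2 = 0) := by omega
    rw [if_neg this]
    rw [zero_add]
    congr 1
    apply Fin.ext
    simp
    omega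
  simp only [h0, h1]
  have : ∀ i : Fin N,
      ((if (1 + a i) ≠ 0 then (1:ℕ) else 0) + (if a i ≠ 0 then 1 else 0)) = 1 := by
    intro i
    rcases zmod2_cases (a i) with h | h <;> simp [h] <;> decide
  simp only [this]
  simp

lemma mem_extDoubling {N : ℕ} (E : Submodule (ZMod 2) (Fin N → ZMod 2))
    (x : Fin (2 * N) → ZMod 2) :
    x ∈ ExtDoubling E ↔ ∃ c : ZMod 2, ∃ a ∈ E, x = c • ellOne N + dmap a := by
  rw [ExtDoubling, Submodule.mem_span_insert]
  constructor
  · rintro ⟨c, z, hz, rfl⟩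
    have : dmap '' (E : Set (Fin N → ZMod 2)) = ⇑(Dlin N) '' E := rfl
    rw [this, ← Submodule.map_coe, Submodule.span_eq] at hz
    obtain ⟨a, ha, rfl⟩ := hz
    exact ⟨c, a, ha, rfl⟩
  · rintro ⟨c, a, ha, rfl⟩
    exact ⟨c, dmap a, Submodule.subset_span ⟨a, ha, rfl⟩, rfl⟩

/-- If E is a k-dimensional doubly even binary code of length 8n, then the extended
doubling 𝒟(E) is a (k+1)-dimensional triply even binary code of length 16n. -/
theorem extDoubling_triplyEven (n k : ℕ) (hn : 0 < n)
    (E : Submodule (ZMod 2) (Fin (8 * n) → ZMod 2))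
    (hE : DoublyEven E) (hk : Module.finrank (ZMod 2) E = k) :
    TriplyEven (ExtDoubling E) ∧ Module.finrank (ZMod 2) (ExtDoubling E) = k + 1 := by
  constructor
  · intro x hx
    obtain ⟨c, a, ha, rfl⟩ := (mem_extDoubling E x).mp hx
    rcases zmod2_cases c with rfl | rfl
    · rw [zero_smul, zero_add, wt_dmap]
      obtain ⟨m, hm⟩ := hE a ha
      exact ⟨m, by omega⟩
    · rw [one_smul, wt_ell_add_dmap]
      exact ⟨n, by ring⟩
  · -- dimension count
    have hinj : Function.Injective (Dlin (8 * n)) := dmap_injective (8 * n)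
    set S := Submodule.map (Dlin (8 * n)) E with hS
    have hspan : ExtDoubling E = (Submodule.span (ZMod 2) {ellOne (8 * n)}) ⊔ S := by
      rw [ExtDoubling, Submodule.span_insert]
      congr 1
      have : dmap '' (E : Set (Fin (8 * n) → ZMod 2)) = ⇑(Dlin (8 * n)) '' E := rfl
      rw [this, ← Submodule.map_coe, Submodule.span_eq]
    have hSrank : finrank (ZMod 2) S = k := by
      rw [← hk]
      exact (LinearEquiv.finrank_eq (Submodule.equivMapOfInjective _ hinj E)).symm
    have hell_ne : ellOne (8 * n) ≠ 0 := by
      intro h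
      have h01 : (0 : ℕ) < 2 * (8 * n) := by omega
      have := congrFun h ⟨0, h01⟩
      simp [ellOne] at this
    have hell_notmem : ellOne (8 * n) ∉ S := by
      rintro ⟨a, _, heq⟩
      have h0 : (0 : ℕ) < 2 * (8 * n) := by omega
      have h1 : (1 : ℕ) < 2 * (8 * n) := by omega
      have e0 := congrFun heq ⟨0, h0⟩
      have e1 := congrFun heq ⟨1, h1⟩
      simp only [Dlin, LinearMap.coe_mk, AddHom.coe_mk, dmap, ellOne] at e0 e1
      norm_num at e0 e1
      rw [show ((⟨0 / 2, by omega⟩ : Fin (8 * n))) = ⟨1 / 2, by omega⟩ by apply Fin.ext; simp] at e0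
      rw [e1] at e0
      exact one_ne_zero e0.symm
    have hdisj : Disjoint (Submodule.span (ZMod 2) {ellOne (8 * n)}) S := by
      rw [disjoint_iff]
      ext x
      simp only [Submodule.mem_inf, Submodule.mem_bot]
      constructor
      · rintro ⟨hx1, hx2⟩
        rw [Submodule.mem_span_singleton] at hx1
        obtain ⟨c, rfl⟩ := hx1
        rcases zmod2_cases c with rfl | rfl
        · simp
        · rw [one_smul] at hx2
          exact absurd hx2 hell_notmem
      · rintro rfl
        exact ⟨Submodule.zero_mem _, Submodule.zero_mem _⟩
    have := Submodule.finrank_sup_add_finrank_inf_eq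
      (Submodule.span (ZMod 2) {ellOne (8 * n)}) S
    rw [hdisj.eq_bot, finrank_bot, finrank_span_singleton hell_ne, hSrank] at this
    rw [hspan]
    omega
end

section
/- Let (R,q) be a non-singular 2m-dimensional quadratic space of plus type over F_2, and let (R^3, q^3) denote the orthogonal direct sum of three copies. Let S_1, S_2, P, Q, T, U and an isomorphism φ: T → U be as in the construction 𝒮(S_1,S_2,P,Q,T,φ) (with m-k_1-k_2 even). Then the subspace 𝒮 = Span{(s_1,0,0), (0,s_2,0), (p,p,0), (q,0,q), (0,t,φ(t)) : s_i ∈ S_i, p ∈ P, q ∈ Q, t ∈ T} of R^3 is a maximal totally singular subspace, i.e., totally singular of dimension 3m. -/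
open QuadraticMap Module Submodule

section
variable {R : Type*} [AddCommGroup R] [Module (ZMod 2) R]

def IsTotallySingular (Q : QuadraticForm (ZMod 2) R) (S : Submodule (ZMod 2) R) : Prop :=
  ∀ x ∈ S, Q x = 0

def QuadNonsingular (Q : QuadraticForm (ZMod 2) R) : Prop :=
  ∀ a : R, (∀ b : R, polar Q a b = 0) → a = 0

def IsPlusType (Q : QuadraticForm (ZMod 2) R) (m : ℕ) : Prop :=
  (∃ S : Submodule (ZMod 2) R, IsTotallySingular Q S ∧ Module.finrank (ZMod 2) S = m) ∧
  ∀ S : Submodule (ZMod 2) R, IsTotallySingular Q S → Module.finrank (ZMod 2) S ≤ m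

def orthComp (Q : QuadraticForm (ZMod 2) R) (A : Submodule (ZMod 2) R) :
    Submodule (ZMod 2) R where
  carrier := {x | ∀ a ∈ A, polar Q x a = 0}
  add_mem' := fun hx hy a ha => by
    rw [polar_add_left, hx a ha, hy a ha, add_zero]
  zero_mem' := fun a ha => by simp [polar]
  smul_mem' := fun c x hx a ha => by
    rw [polar_smul_left, hx a ha, smul_zero]

def NonsingularOn (Q : QuadraticForm (ZMod 2) R) (A : Submodule (ZMod 2) R) : Prop :=
  ∀ x ∈ A, (∀ y ∈ A, polar Q x y = 0) → x = 0

end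

section
variable {R : Type*} [AddCommGroup R] [Module (ZMod 2) R]

/-- The data of the construction 𝒮(S₁,S₂,P,Q,T,φ) of Theorem 4.1 (m - k₁ - k₂ even):
S₁ is a k₁-dimensional totally singular subspace, S₂ ⊆ S₁ is k₂-dimensional,
P is an (m-k₁-k₂)-dimensional non-singular subspace of S₁^⊥, Q is a complement of S₁ in
(S₁ ⊥ P)^⊥, T is a complement of S₂ in (S₂ ⊥ P)^⊥, and φ : T → U = Q^⊥ is an isomorphism
of quadratic spaces. -/
def EvenConstruction (Q : QuadraticForm (ZMod 2) R) (m k1 k2 : ℕ)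
    (S1 S2 P Qs T : Submodule (ZMod 2) R) (φ : R →ₗ[ZMod 2] R) : Prop :=
  IsTotallySingular Q S1 ∧ Module.finrank (ZMod 2) S1 = k1 ∧
  S2 ≤ S1 ∧ Module.finrank (ZMod 2) S2 = k2 ∧
  k1 + k2 ≤ m ∧ Even (m - k1 - k2) ∧
  P ≤ orthComp Q S1 ∧ NonsingularOn Q P ∧ Module.finrank (ZMod 2) P = m - k1 - k2 ∧
  Disjoint S1 Qs ∧ S1 ⊔ Qs = orthComp Q (S1 ⊔ P) ∧
  Disjoint S2 T ∧ S2 ⊔ T = orthComp Q (S2 ⊔ P) ∧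
  (∀ x ∈ T, Q (φ x) = Q x) ∧ Set.InjOn φ (T : Set R) ∧
  Submodule.map φ T = orthComp Q Qs

/-- The subspace 𝒮(S₁,S₂,P,Q,T,φ) of R³. -/
def SpanEven (S1 S2 P Qs T : Submodule (ZMod 2) R) (φ : R →ₗ[ZMod 2] R) :
    Submodule (ZMod 2) (Fin 3 → R) :=
  Submodule.span (ZMod 2)
    ({w | ∃ s ∈ S1, w = ![s, 0, 0]} ∪ {w | ∃ s ∈ S2, w = ![0, s, 0]} ∪
     {w | ∃ p ∈ P, w = ![p, p, 0]} ∪ {w | ∃ q ∈ Qs, w = ![q, 0, q]} ∪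
     {w | ∃ t ∈ T, w = ![0, t, φ t]})

end

/-!
Write `x = (s₁, s₂, p, q, t)` for an element of `S₁ × S₂ × P × Q × T`; the vectors
`(s₁ + p + q, s₂ + p + t, q + φ t)` sweep out exactly `𝒮`, linearly in `x`. This parametrization
is injective: if the vector vanishes, then `p = s₁ + q` is orthogonal to `P` because `S₁` and `Q`
are, so `p = 0` by non-singularity of `P`; then `s₁ = q ∈ S₁ ∩ Q = 0`, and injectivity of `φ` gives
`t = 0` and `s₂ = 0`. Since `S₁ ⊕ Q = (S₁ ⊕ P)^⊥` and `S₂ ⊕ T = (S₂ ⊕ P)^⊥` in the non-singular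
space `R`, `dim Q = m + k₂ - k₁` and `dim T = m + k₁ - k₂`, so
`dim 𝒮 = k₁ + k₂ + (m - k₁ - k₂) + dim Q + dim T = 3m`. Total singularity is an expansion of `q³`
in polar forms: every cross term vanishes by the orthogonality relations of the construction, and
what remains, `q(p)`, `q(q)` and `q(t) = q(φ t)`, occurs twice each.
-/

theorem Submodule.finrank_sup_of_disjoint {K V : Type*} [DivisionRing K] [AddCommGroup V]
    [Module K V] [FiniteDimensional K V] {s t : Submodule K V} (h : Disjoint s t) :
    finrank K ↥(s ⊔ t) = finrank K s + finrank K t := by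
  have := Submodule.finrank_sup_add_finrank_inf_eq s t
  rwa [h.eq_bot, finrank_bot, add_zero] at this

section

variable {R : Type*} [AddCommGroup R] [Module (ZMod 2) R] {Q : QuadraticForm (ZMod 2) R}

theorem orthComp_eq_orthogonal_polarBilin (A : Submodule (ZMod 2) R) :
    orthComp Q A = LinearMap.BilinForm.orthogonal (polarBilin Q) A := by
  ext x
  simp only [LinearMap.BilinForm.mem_orthogonal_iff, polarBilin_apply_apply,
    polar_comm Q _ x]
  rfl

theorem QuadNonsingular.nondegenerate_polarBilin (hns : QuadNonsingular Q) :
    (polarBilin Q).Nondegenerate := by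
  refine (LinearMap.IsRefl.nondegenerate_iff_separatingLeft fun x y hxy => ?_).mpr
    fun a ha => hns a fun b => ha b
  simpa only [polarBilin_apply_apply, polar_comm Q y x] using hxy

theorem QuadNonsingular.finrank_orthComp_add [FiniteDimensional (ZMod 2) R]
    (hns : QuadNonsingular Q) (A : Submodule (ZMod 2) R) :
    finrank (ZMod 2) (orthComp Q A) + finrank (ZMod 2) A = finrank (ZMod 2) R := by
  rw [orthComp_eq_orthogonal_polarBilin,
    LinearMap.BilinForm.finrank_orthogonal hns.nondegenerate_polarBilin]
  have := Submodule.finrank_le A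
  omega

theorem NonsingularOn.disjoint_of_le_orthComp {A P : Submodule (ZMod 2) R}
    (hP : NonsingularOn Q P) (hPA : P ≤ orthComp Q A) : Disjoint A P :=
  Submodule.disjoint_def.mpr fun x hxA hxP =>
    hP x hxP fun y hy => (polar_comm Q x y).trans (hPA hy x hxA)

theorem finrank_add_of_sup_eq_orthComp [FiniteDimensional (ZMod 2) R] (hns : QuadNonsingular Q)
    {S C P : Submodule (ZMod 2) R} (hSC : Disjoint S C) (hSP : Disjoint S P)
    (hC : S ⊔ C = orthComp Q (S ⊔ P)) :
    finrank (ZMod 2) C + 2 * finrank (ZMod 2) S + finrank (ZMod 2) P = finrank (ZMod 2) R := by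
  have hsum := hns.finrank_orthComp_add (S ⊔ P)
  rw [← hC, Submodule.finrank_sup_of_disjoint hSC, Submodule.finrank_sup_of_disjoint hSP] at hsum
  omega

variable (S1 S2 P Qs T : Submodule (ZMod 2) R) (φ : R →ₗ[ZMod 2] R)

def spanEvenParam : (S1 × S2 × P × Qs × T) →ₗ[ZMod 2] (Fin 3 → R) where
  toFun x := ![x.1 + x.2.2.1 + x.2.2.2.1, x.2.1 + x.2.2.1 + x.2.2.2.2, x.2.2.2.1 + φ x.2.2.2.2]
  map_add' x y := by
    funext i
    fin_cases i <;> simp <;> abel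
  map_smul' c x := by
    funext i
    fin_cases i <;> simp [smul_add]

theorem range_spanEvenParam :
    LinearMap.range (spanEvenParam S1 S2 P Qs T φ) = SpanEven S1 S2 P Qs T φ := by
  apply le_antisymm
  · rintro _ ⟨⟨a, b, c, d, e⟩, rfl⟩
    have hsum : spanEvenParam S1 S2 P Qs T φ (a, b, c, d, e) =
        ![(a : R), 0, 0] + ![0, (b : R), 0] + ![(c : R), c, 0] + ![(d : R), 0, d] +
          ![0, (e : R), φ e] := by
      funext i
      fin_cases i <;> simp [spanEvenParam]
    rw [hsum]
    refine add_mem (add_mem (add_mem (add_mem ?_ ?_) ?_) ?_) ?_ <;> apply subset_span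
    exacts [.inl (.inl (.inl (.inl ⟨a, a.2, rfl⟩))), .inl (.inl (.inl (.inr ⟨b, b.2, rfl⟩))),
      .inl (.inl (.inr ⟨c, c.2, rfl⟩)), .inl (.inr ⟨d, d.2, rfl⟩), .inr ⟨e, e.2, rfl⟩]
  · refine span_le.mpr ?_
    rintro _ ((((⟨s, hs, rfl⟩ | ⟨s, hs, rfl⟩) | ⟨p, hp, rfl⟩) | ⟨q, hq, rfl⟩) | ⟨t, ht, rfl⟩)
    · exact ⟨(⟨s, hs⟩, 0, 0, 0, 0), by funext i; fin_cases i <;> simp [spanEvenParam]⟩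
    · exact ⟨(0, ⟨s, hs⟩, 0, 0, 0), by funext i; fin_cases i <;> simp [spanEvenParam]⟩
    · exact ⟨(0, 0, ⟨p, hp⟩, 0, 0), by funext i; fin_cases i <;> simp [spanEvenParam]⟩
    · exact ⟨(0, 0, 0, ⟨q, hq⟩, 0), by funext i; fin_cases i <;> simp [spanEvenParam]⟩
    · exact ⟨(0, 0, 0, 0, ⟨t, ht⟩), by funext i; fin_cases i <;> simp [spanEvenParam]⟩

variable {S1 S2 P Qs T φ}

theorem spanEvenParam_injective (hPns : NonsingularOn Q P) (hPS1 : P ≤ orthComp Q S1)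
    (hQs : Qs ≤ orthComp Q (S1 ⊔ P)) (hS1Qs : Disjoint S1 Qs) (hφ : Set.InjOn φ T) :
    Function.Injective (spanEvenParam S1 S2 P Qs T φ) := by
  rw [← LinearMap.ker_eq_bot, eq_bot_iff]
  rintro ⟨⟨a, ha⟩, ⟨b, hb⟩, ⟨c, hc⟩, ⟨d, hd⟩, ⟨e, he⟩⟩ hker
  have h0 : a + c + d = 0 := congrFun hker 0
  have h1 : b + c + e = 0 := congrFun hker 1
  have h2 : d + φ e = 0 := congrFun hker 2
  have hca : c = a + d := by
    rw [← sub_eq_zero, ZModModule.sub_eq_add, ← h0]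
    abel
  have hc0 : c = 0 := hPns c hc fun y hy => by
    rw [hca, polar_add_left, polar_comm, hPS1 hy a ha, hQs hd y (mem_sup_right hy), add_zero]
  have ha0 : a = 0 := by
    rw [hc0, add_zero, add_eq_zero_iff_eq_neg, ZModModule.neg_eq_self] at h0
    exact disjoint_def.mp hS1Qs a ha (h0 ▸ hd)
  have hd0 : d = 0 := by simpa [ha0, hc0] using h0
  have he0 : e = 0 := hφ he T.zero_mem (by simpa [hd0] using h2)
  have hb0 : b = 0 := by simpa [hc0, he0] using h1
  simp [Prod.ext_iff, ha0, hb0, hc0, hd0, he0]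

theorem singular_of_mem_range_spanEvenParam (hS1 : IsTotallySingular Q S1) (hS21 : S2 ≤ S1)
    (hPS1 : P ≤ orthComp Q S1) (hQs : Qs ≤ orthComp Q (S1 ⊔ P))
    (hT : T ≤ orthComp Q (S2 ⊔ P)) (hφT : T.map φ ≤ orthComp Q Qs)
    (hφQ : ∀ x ∈ T, Q (φ x) = Q x) :
    ∀ v ∈ LinearMap.range (spanEvenParam S1 S2 P Qs T φ), Q (v 0) + Q (v 1) + Q (v 2) = 0 := by
  rintro _ ⟨⟨⟨a, ha⟩, ⟨b, hb⟩, ⟨c, hc⟩, ⟨d, hd⟩, ⟨e, he⟩⟩, rfl⟩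
  have hadd {x y : R} (h : polar Q y x = 0) : Q (x + y) = Q x + Q y := by
    rw [QuadraticMap.map_add Q, polar_comm, h, add_zero]
  have h0 : Q (a + c + d) = Q c + Q d := by
    rw [hadd (hQs hd _ (add_mem_sup ha hc)), hadd (hPS1 hc a ha), hS1 a ha, zero_add]
  have h1 : Q (b + c + e) = Q c + Q e := by
    rw [hadd (hT he _ (add_mem_sup hb hc)), hadd (hPS1 hc b (hS21 hb)), hS1 b (hS21 hb), zero_add]
  have h2 : Q (d + φ e) = Q d + Q e := by
    rw [hadd (hφT ⟨e, he, rfl⟩ d hd), hφQ e he]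
  change Q (a + c + d) + Q (b + c + e) + Q (d + φ e) = 0
  rw [h0, h1, h2]
  grind

end

theorem spanEven_maximal_totally_singular_general {R : Type*} [AddCommGroup R] [Module (ZMod 2) R]
    [FiniteDimensional (ZMod 2) R] (m k1 k2 : ℕ)
    (Q : QuadraticForm (ZMod 2) R) (hdim : Module.finrank (ZMod 2) R = 2 * m)
    (hns : QuadNonsingular Q)
    (S1 S2 P Qs T : Submodule (ZMod 2) R) (φ : R →ₗ[ZMod 2] R)
    (h : EvenConstruction Q m k1 k2 S1 S2 P Qs T φ) :
    (∀ v ∈ SpanEven S1 S2 P Qs T φ, Q (v 0) + Q (v 1) + Q (v 2) = 0) ∧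
    Module.finrank (ZMod 2) (SpanEven S1 S2 P Qs T φ) = 3 * m := by
  obtain ⟨hS1, hk1, hS21, hk2, hkm, -, hPS1, hPns, hPdim, hS1Qs, hQsup, hS2T, hTsup,
    hφQ, hφinj, hφT⟩ := h
  have hQs : Qs ≤ orthComp Q (S1 ⊔ P) := hQsup ▸ le_sup_right
  have hT : T ≤ orthComp Q (S2 ⊔ P) := hTsup ▸ le_sup_right
  have hS1P : Disjoint S1 P := hPns.disjoint_of_le_orthComp hPS1
  have hdimQs := finrank_add_of_sup_eq_orthComp hns hS1Qs hS1P hQsup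
  have hdimT := finrank_add_of_sup_eq_orthComp hns hS2T (hS1P.mono_left hS21) hTsup
  rw [← range_spanEvenParam]
  refine ⟨singular_of_mem_range_spanEvenParam hS1 hS21 hPS1 hQs hT hφT.le hφQ, ?_⟩
  rw [LinearMap.finrank_range_of_inj (spanEvenParam_injective hPns hPS1 hQs hS1Qs hφinj)]
  simp only [finrank_prod]
  omega

/-- 𝒮(S₁,S₂,P,Q,T,φ) is a maximal totally singular subspace of (R³, q³), i.e. it is
totally singular of dimension 3m. -/
theorem spanEven_maximal_totally_singular {R : Type*} [AddCommGroup R] [Module (ZMod 2) R]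
    [FiniteDimensional (ZMod 2) R] (m k1 k2 : ℕ)
    (Q : QuadraticForm (ZMod 2) R) (hdim : Module.finrank (ZMod 2) R = 2 * m)
    (hns : QuadNonsingular Q) (htype : IsPlusType Q m)
    (S1 S2 P Qs T : Submodule (ZMod 2) R) (φ : R →ₗ[ZMod 2] R)
    (h : EvenConstruction Q m k1 k2 S1 S2 P Qs T φ) :
    (∀ v ∈ SpanEven S1 S2 P Qs T φ, Q (v 0) + Q (v 1) + Q (v 2) = 0) ∧
    Module.finrank (ZMod 2) (SpanEven S1 S2 P Qs T φ) = 3 * m :=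
  spanEven_maximal_totally_singular_general m k1 k2 Q hdim hns S1 S2 P Qs T φ h
end

section
/- Let √2 D_{16}^+ = Σ_{1≤i,j≤16} Z(α_i + α_j) + Z(α_{(1^{16})}/2) in R^{16}, where the α_i are orthogonal of norm 2. Then its dual lattice is (√2 D_{16}^+)^* = Σ_{1≤i≤16} Z α_i + Σ_{c ∈ ℰ_{16}} Z(α_c/2) + Z(α_{(1^{16})}/4), where ℰ_{16} is the set of even-weight vectors in F_2^{16} and α_c = Σ c_i α_i. -/
/-- The orthogonal vectors α_i of norm 2 in ℝ¹⁶ (α_i = √2 e_i). -/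
noncomputable def alpha16 (i : Fin 16) : Fin 16 → ℝ :=
  fun j => if j = i then Real.sqrt 2 else 0

/-- The standard Euclidean inner product on ℝ¹⁶. -/
def dot16 (x y : Fin 16 → ℝ) : ℝ := ∑ i, x i * y i

/-- α_c = Σ_{i : c_i = 1} α_i for a binary word c. -/
noncomputable def alphaWord (c : Fin 16 → ZMod 2) : Fin 16 → ℝ :=
  ∑ i, if c i = 1 then alpha16 i else 0

/-- The lattice √2 D₁₆⁺ = Σ ℤ(α_i + α_j) + ℤ(α_{(1¹⁶)}/2). -/
noncomputable def sqrt2D16plus : Submodule ℤ (Fin 16 → ℝ) :=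
  Submodule.span ℤ
    ({v | ∃ i j, v = alpha16 i + alpha16 j} ∪ {(2 : ℝ)⁻¹ • ∑ i, alpha16 i})

lemma hs2 : Real.sqrt 2 * Real.sqrt 2 = 2 := Real.mul_self_sqrt (by norm_num)

lemma dot16_add_right (x v w : Fin 16 → ℝ) : dot16 x (v + w) = dot16 x v + dot16 x w := by
  simp [dot16, mul_add, Finset.sum_add_distrib]

lemma dot16_smul_right (x : Fin 16 → ℝ) (r : ℝ) (v : Fin 16 → ℝ) :
    dot16 x (r • v) = r * dot16 x v := by
  simp only [dot16, Pi.smul_apply, smul_eq_mul, Finset.mul_sum]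
  exact Finset.sum_congr rfl fun i _ => by ring
lemma dot16_zsmul_right (x : Fin 16 → ℝ) (n : ℤ) (v : Fin 16 → ℝ) :
    dot16 x (n • v) = n * dot16 x v := by
  simp only [dot16, Pi.smul_apply, zsmul_eq_mul, Finset.mul_sum]
  exact Finset.sum_congr rfl fun i _ => by ring

lemma dot16_add_left (x y v : Fin 16 → ℝ) : dot16 (x + y) v = dot16 x v + dot16 y v := by
  simp [dot16, add_mul, Finset.sum_add_distrib]

lemma dot16_zsmul_left (n : ℤ) (x v : Fin 16 → ℝ) : dot16 (n • x) v = n * dot16 x v := by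
  simp only [dot16, Pi.smul_apply, zsmul_eq_mul, Finset.mul_sum]
  exact Finset.sum_congr rfl fun i _ => by ring

lemma dot16_smul_left (r : ℝ) (x v : Fin 16 → ℝ) : dot16 (r • x) v = r * dot16 x v := by
  simp only [dot16, Pi.smul_apply, smul_eq_mul, Finset.mul_sum]
  exact Finset.sum_congr rfl fun i _ => by ring

lemma dot16_alpha_right (x : Fin 16 → ℝ) (i : Fin 16) :
    dot16 x (alpha16 i) = Real.sqrt 2 * x i := by
  simp [dot16, alpha16, mul_ite, Finset.sum_ite_eq', mul_comm]

lemma sum_alpha_apply (j : Fin 16) : (∑ i, alpha16 i) j = Real.sqrt 2 := by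
  simp [Finset.sum_apply, alpha16, Finset.sum_ite_eq]

lemma dot16_sum_alpha (x : Fin 16 → ℝ) :
    dot16 x (∑ i, alpha16 i) = Real.sqrt 2 * ∑ i, x i := by
  simp only [dot16, sum_alpha_apply]
  rw [← Finset.sum_mul, mul_comm]

lemma alphaWord_apply (c : Fin 16 → ZMod 2) (j : Fin 16) :
    alphaWord c j = if c j = 1 then Real.sqrt 2 else 0 := by
  simp only [alphaWord, Finset.sum_apply]
  rw [Finset.sum_eq_single j]
  · by_cases h : c j = 1 <;> simp [h, alpha16]
  · intro b _ hb
    by_cases h : c b = 1 <;> simp [h, alpha16, Ne.symm hb]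
  · simp

lemma sum_alphaWord (c : Fin 16 → ZMod 2) :
    ∑ j, alphaWord c j = (wt c : ℝ) * Real.sqrt 2 := by
  simp only [alphaWord_apply]
  rw [Finset.sum_ite, Finset.sum_const, Finset.sum_const_zero, add_zero, nsmul_eq_mul, wt]
  have hfil : (Finset.univ.filter fun x => c x = 1) = (Finset.univ.filter fun i => c i ≠ 0) := by
    apply Finset.filter_congr
    intro j _
    generalize c j = a
    revert a
    decide
  rw [hfil]

/-- the set of vectors pairing integrally with a fixed x, as a submodule in the v slot -/
def intDual (x : Fin 16 → ℝ) : Submodule ℤ (Fin 16 → ℝ) where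
  carrier := {v | ∃ n : ℤ, dot16 x v = n}
  zero_mem' := ⟨0, by simp [dot16]⟩
  add_mem' := by
    rintro a b ⟨n, hn⟩ ⟨p, hp⟩
    exact ⟨n + p, by rw [dot16_add_right, hn, hp]; push_cast; ring⟩
  smul_mem' := by
    rintro z v ⟨n, hn⟩
    exact ⟨z * n, by rw [dot16_zsmul_right, hn]; push_cast; ring⟩

/-- the dual as a submodule -/
noncomputable def dualMod : Submodule ℤ (Fin 16 → ℝ) where
  carrier := {x | ∀ v ∈ sqrt2D16plus, ∃ n : ℤ, dot16 x v = n}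
  zero_mem' := fun v _ => ⟨0, by simp [dot16]⟩
  add_mem' := by
    rintro a b ha hb v hv
    obtain ⟨n, hn⟩ := ha v hv
    obtain ⟨p, hp⟩ := hb v hv
    exact ⟨n + p, by rw [dot16_add_left, hn, hp]; push_cast; ring⟩
  smul_mem' := by
    rintro z a ha v hv
    obtain ⟨n, hn⟩ := ha v hv
    exact ⟨z * n, by rw [dot16_zsmul_left, hn]; push_cast; ring⟩

lemma pairs_int (x : Fin 16 → ℝ)
    (h1 : ∀ i j : Fin 16, ∃ n : ℤ, dot16 x (alpha16 i + alpha16 j) = n)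
    (h2 : ∃ n : ℤ, dot16 x ((2 : ℝ)⁻¹ • ∑ i, alpha16 i) = n) :
    ∀ v ∈ sqrt2D16plus, ∃ n : ℤ, dot16 x v = n := by
  have : sqrt2D16plus ≤ intDual x := by
    rw [sqrt2D16plus, Submodule.span_le]
    rintro v (⟨i, j, rfl⟩ | rfl)
    · exact h1 i j
    · exact h2
  exact fun v hv => this hv

-- forward: each generator of the RHS is in dualMod
lemma alpha_mem_dual (k : Fin 16) : alpha16 k ∈ dualMod := by
  apply pairs_int
  · intro i j
    refine ⟨(if i = k then 2 else 0) + (if j = k then 2 else 0), ?_⟩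
    rw [dot16_add_right, dot16_alpha_right, dot16_alpha_right]
    unfold alpha16
    push_cast
    by_cases hi : i = k <;> by_cases hj : j = k <;>
      simp [hi, hj, mul_add] <;> try nlinarith [hs2]
  · refine ⟨1, ?_⟩
    rw [dot16_smul_right, dot16_sum_alpha]
    have : ∑ i, alpha16 k i = Real.sqrt 2 := by
      simp [alpha16, Finset.sum_ite_eq']
    rw [this]
    push_cast
    nlinarith [hs2]

lemma half_word_mem_dual (c : Fin 16 → ZMod 2) (hc : Even (wt c)) :
    (2 : ℝ)⁻¹ • alphaWord c ∈ dualMod := by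
  obtain ⟨u, hu⟩ := hc
  apply pairs_int
  · intro i j
    refine ⟨(if c i = 1 then 1 else 0) + (if c j = 1 then 1 else 0), ?_⟩
    rw [dot16_smul_left, dot16_add_right, dot16_alpha_right, dot16_alpha_right,
      alphaWord_apply, alphaWord_apply]
    push_cast
    by_cases hi : c i = 1 <;> by_cases hj : c j = 1 <;>
      simp [hi, hj, mul_add] <;> try nlinarith [hs2]
  · refine ⟨u, ?_⟩
    rw [dot16_smul_left, dot16_smul_right, dot16_sum_alpha, sum_alphaWord]
    have : (wt c : ℝ) = 2 * u := by rw [hu]; push_cast; ring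
    rw [this]
    push_cast
    nlinarith [hs2]

lemma quarter_sum_mem_dual : (4 : ℝ)⁻¹ • (∑ i, alpha16 i) ∈ dualMod := by
  apply pairs_int
  · intro i j
    refine ⟨1, ?_⟩
    rw [dot16_smul_left, dot16_add_right, dot16_alpha_right, dot16_alpha_right,
      sum_alpha_apply, sum_alpha_apply]
    push_cast
    nlinarith [hs2]
  · refine ⟨4, ?_⟩
    rw [dot16_smul_left, dot16_smul_right, dot16_sum_alpha]
    have : ∑ i : Fin 16, (∑ k, alpha16 k) i = 16 * Real.sqrt 2 := by
      simp only [sum_alpha_apply, Finset.sum_const, Finset.card_univ, Fintype.card_fin,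
        nsmul_eq_mul]
      norm_num
    rw [this]
    push_cast
    nlinarith [hs2]

/-- The dual lattice of √2 D₁₆⁺ is Σ ℤ α_i + Σ_{c even} ℤ(α_c/2) + ℤ(α_{(1¹⁶)}/4). -/
theorem sqrt2D16plus_dual :
    {x : Fin 16 → ℝ | ∀ v ∈ sqrt2D16plus, ∃ n : ℤ, dot16 x v = n} =
    ↑(Submodule.span ℤ
      (Set.range alpha16 ∪
       {v | ∃ c : Fin 16 → ZMod 2, Even (wt c) ∧ v = (2 : ℝ)⁻¹ • alphaWord c} ∪
       {(4 : ℝ)⁻¹ • ∑ i, alpha16 i})) := by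
  ext x
  simp only [Set.mem_setOf_eq, SetLike.mem_coe]
  constructor
  · -- dual ⊆ span
    intro hx
    have hgen : ∀ i j : Fin 16, ∃ n : ℤ, Real.sqrt 2 * (x i + x j) = (n : ℝ) := by
      intro i j
      obtain ⟨n, hn⟩ := hx _ (Submodule.subset_span (Or.inl ⟨i, j, rfl⟩))
      refine ⟨n, ?_⟩
      rw [← hn, dot16_add_right, dot16_alpha_right, dot16_alpha_right]
      ring
    choose kk hkk using fun i => hgen i i
    obtain ⟨m, hm⟩ := hx _ (Submodule.subset_span (Or.inr rfl))
    rw [dot16_smul_right, dot16_sum_alpha] at hm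
    have hk : ∀ i, (kk i : ℝ) = 2 * (Real.sqrt 2 * x i) := fun i => by
      rw [← hkk i]; ring
    set ε : ℤ := kk 0 % 2 with hεdef
    have hpar : ∀ i, ∃ t : ℤ, kk i - ε = 2 * t := by
      intro i
      obtain ⟨n, hn⟩ := hgen i 0
      have hni : kk i + kk 0 = 2 * n := by
        have : ((kk i + kk 0 : ℤ) : ℝ) = ((2 * n : ℤ) : ℝ) := by
          push_cast
          rw [hk i, hk 0]
          nlinarith [hn]
        exact_mod_cast this
      exact ⟨(kk i - ε) / 2, by omega⟩
    have hsum : ∑ i, kk i = 4 * m := by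
      have : ((∑ i, kk i : ℤ) : ℝ) = ((4 * m : ℤ) : ℝ) := by
        push_cast
        have e : ∑ i, ((kk i : ℤ) : ℝ) = ∑ i, 2 * (Real.sqrt 2 * x i) :=
          Finset.sum_congr rfl fun i _ => hk i
        rw [e]
        have e2 : ∑ i, 2 * (Real.sqrt 2 * x i) = 2 * (Real.sqrt 2 * ∑ i, x i) := by
          rw [Finset.mul_sum, Finset.mul_sum]
        rw [e2]
        nlinarith [hm]
      exact_mod_cast this
    choose y hy using hpar
    have hysum : ∑ i, y i = 2 * m - 8 * ε := by
      have h1 : ∑ i, (kk i - ε) = 2 * ∑ i, y i := by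
        rw [Finset.mul_sum]
        exact Finset.sum_congr rfl fun i _ => hy i
      have h2 : ∑ i, (kk i - ε) = (∑ i, kk i) - 16 * ε := by
        rw [Finset.sum_sub_distrib, Finset.sum_const, Finset.card_univ, Fintype.card_fin,
          nsmul_eq_mul]
        norm_num
      omega
    have hxj : ∀ j, x j = Real.sqrt 2 * (2 * y j + ε) / 4 := by
      intro j
      have h1 : (kk j : ℝ) = 2 * y j + ε := by
        have : kk j = 2 * y j + ε := by have := hy j; omega
        exact_mod_cast congrArg (Int.cast : ℤ → ℝ) this
      have h2 := hk j
      rw [h1] at h2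
      linear_combination (-(Real.sqrt 2) / 4) * h2 + (-(x j) / 2) * hs2
    -- generators membership
    have hwt : ∀ i : Fin 16, i ≠ 0 →
        wt (fun j => if j = i ∨ j = 0 then (1 : ZMod 2) else 0) = 2 := by
      intro i hi
      unfold wt
      have hf : (Finset.univ.filter fun j =>
          (if j = i ∨ j = 0 then (1 : ZMod 2) else 0) ≠ 0) = {i, 0} := by
        ext j
        simp only [Finset.mem_filter, Finset.mem_univ, true_and, Finset.mem_insert,
          Finset.mem_singleton]
        by_cases h : j = i ∨ j = 0 <;> simp [h]
      rw [hf, Finset.card_insert_of_notMem (by simp [hi]), Finset.card_singleton]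
    have hmem : ∀ i : Fin 16, i ≠ 0 →
        ((2 : ℝ)⁻¹ • alphaWord (fun j => if j = i ∨ j = 0 then 1 else 0)) ∈
          Submodule.span ℤ
            (Set.range alpha16 ∪
             {v | ∃ c : Fin 16 → ZMod 2, Even (wt c) ∧ v = (2 : ℝ)⁻¹ • alphaWord c} ∪
             {(4 : ℝ)⁻¹ • ∑ i, alpha16 i}) := by
      intro i hi
      exact Submodule.subset_span (Or.inl (Or.inr ⟨_, by rw [hwt i hi]; exact ⟨1, rfl⟩, rfl⟩))
    have hα0 : alpha16 0 ∈ Submodule.span ℤ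
        (Set.range alpha16 ∪
         {v | ∃ c : Fin 16 → ZMod 2, Even (wt c) ∧ v = (2 : ℝ)⁻¹ • alphaWord c} ∪
         {(4 : ℝ)⁻¹ • ∑ i, alpha16 i}) :=
      Submodule.subset_span (Or.inl (Or.inl ⟨0, rfl⟩))
    have hq : ((4 : ℝ)⁻¹ • ∑ i, alpha16 i) ∈ Submodule.span ℤ
        (Set.range alpha16 ∪
         {v | ∃ c : Fin 16 → ZMod 2, Even (wt c) ∧ v = (2 : ℝ)⁻¹ • alphaWord c} ∪
         {(4 : ℝ)⁻¹ • ∑ i, alpha16 i}) :=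
      Submodule.subset_span (Or.inr rfl)
    have hAW : ∀ i j : Fin 16,
        alphaWord (fun t => if t = i ∨ t = 0 then (1 : ZMod 2) else 0) j
          = if j = i ∨ j = 0 then Real.sqrt 2 else 0 := by
      intro i j
      rw [alphaWord_apply]
      by_cases h : j = i ∨ j = 0 <;> simp [h]
    have hysumR : (∑ i, (y i : ℝ)) = 2 * m - 8 * ε := by
      exact_mod_cast congrArg (Int.cast : ℤ → ℝ) hysum
    have hxrep : x =
        (∑ i ∈ Finset.univ.erase (0 : Fin 16),
          y i • ((2 : ℝ)⁻¹ • alphaWord (fun j => if j = i ∨ j = 0 then 1 else 0)))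
        + (y 0 - (m - 4 * ε)) • alpha16 0 + ε • ((4 : ℝ)⁻¹ • ∑ i, alpha16 i) := by
      funext j
      simp only [Pi.add_apply, Finset.sum_apply, Pi.smul_apply]
      simp only [smul_eq_mul, zsmul_eq_mul, hAW, sum_alpha_apply]
      by_cases hj : j = 0
      · subst hj
        have e1 : ∀ i ∈ Finset.univ.erase (0 : Fin 16),
            (y i : ℝ) * (2⁻¹ * (if (0 : Fin 16) = i ∨ (0 : Fin 16) = 0 then Real.sqrt 2 else 0))
              = (y i : ℝ) * (2⁻¹ * Real.sqrt 2) := by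
          intro i _
          rw [if_pos (Or.inr rfl)]
        rw [Finset.sum_congr rfl e1, ← Finset.sum_mul,
          Finset.sum_erase_eq_sub (Finset.mem_univ (0 : Fin 16)), hysumR, hxj 0]
        unfold alpha16
        rw [if_pos rfl]
        push_cast
        simp only [Finset.sum_ite_eq, Finset.mem_univ, if_true]
        ring
      · rw [Finset.sum_eq_single_of_mem j (Finset.mem_erase.mpr ⟨hj, Finset.mem_univ j⟩)
          (fun b _ hb => by rw [if_neg (by rintro (h | h); exact hb h.symm; exact hj h)]; ring),
          if_pos (Or.inl rfl), hxj j]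
        unfold alpha16
        rw [if_neg hj]
        push_cast
        simp only [Finset.sum_ite_eq, Finset.mem_univ, if_true]
        ring
    rw [hxrep]
    exact Submodule.add_mem _
      (Submodule.add_mem _
        (Submodule.sum_mem _ fun i hi =>
          Submodule.smul_mem _ _ (hmem i (Finset.ne_of_mem_erase hi)))
        (Submodule.smul_mem _ _ hα0))
      (Submodule.smul_mem _ _ hq)
  · -- span ⊆ dual
    intro hx
    have hle : Submodule.span ℤ
        (Set.range alpha16 ∪
         {v | ∃ c : Fin 16 → ZMod 2, Even (wt c) ∧ v = (2 : ℝ)⁻¹ • alphaWord c} ∪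
         {(4 : ℝ)⁻¹ • ∑ i, alpha16 i}) ≤ dualMod := by
      rw [Submodule.span_le]
      rintro g ((⟨k, rfl⟩ | ⟨c, hc, rfl⟩) | rfl)
      · exact alpha_mem_dual k
      · exact half_word_mem_dual c hc
      · exact quarter_sum_mem_dual
    exact hle hx
end

section
/- Let c ∈ F_2^{16} with wt(c) = 8. Then the lattice √2 D_{16}^+ + Z(α_c/2) contains a sublattice isometric to √2 E_8 ⊕ √2 E_8. -/
/-- The lattice √2 D₁₆⁺ + ℤ(α_c/2). -/
noncomputable def extendedLattice (c : Fin 16 → ZMod 2) : Submodule ℤ (Fin 16 → ℝ) :=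
  Submodule.span ℤ
    ({v | ∃ i j, v = alpha16 i + alpha16 j} ∪ {(2 : ℝ)⁻¹ • ∑ i, alpha16 i} ∪
     {(2 : ℝ)⁻¹ • alphaWord c})


/-- Twice the coordinates of the Bourbaki simple roots of E₈. -/
def Vmat : Fin 8 → Fin 8 → ℤ :=
  ![![1,-1,-1,-1,-1,-1,-1,1],
    ![2,2,0,0,0,0,0,0],
    ![-2,2,0,0,0,0,0,0],
    ![0,-2,2,0,0,0,0,0],
    ![0,0,-2,2,0,0,0,0],
    ![0,0,0,-2,2,0,0,0],
    ![0,0,0,0,-2,2,0,0],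
    ![0,0,0,0,0,-2,2,0]]

lemma Vmat_gram : ∀ k l, (∑ i, Vmat k i * Vmat l i) = 4 * CartanMatrix.E₈ k l := by decide

lemma dot16_alpha (a b : Fin 16) :
    dot16 (alpha16 a) (alpha16 b) = if a = b then 2 else 0 := by
  unfold dot16 alpha16
  rcases eq_or_ne a b with rfl | h
  · simp [Real.mul_self_sqrt]
  · rw [Finset.sum_eq_zero]
    · simp [h]
    intro k _
    rcases eq_or_ne k a with rfl | hk
    · simp [Ne.symm h, h]
    · simp [hk]

lemma dot16_combo (u w : Fin 8 → ℝ) (f g : Fin 8 → Fin 16) :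
    dot16 (∑ i, u i • alpha16 (f i)) (∑ j, w j • alpha16 (g j)) =
    ∑ i, ∑ j, u i * w j * (if f i = g j then 2 else 0) := by
  unfold dot16
  have key : ∀ k : Fin 16, (∑ i, u i • alpha16 (f i)) k * (∑ j, w j • alpha16 (g j)) k
      = ∑ i, ∑ j, u i * w j * (alpha16 (f i) k * alpha16 (g j) k) := by
    intro k
    simp only [Finset.sum_apply, Pi.smul_apply, smul_eq_mul, Finset.sum_mul_sum]
    congr 1; ext i; congr 1; ext j; ring
  simp only [key]
  rw [Finset.sum_comm]
  congr 1; ext i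
  rw [Finset.sum_comm]
  congr 1; ext j
  rw [← Finset.mul_sum]
  congr 1
  exact dot16_alpha (f i) (g j)

lemma mem_pair (c : Fin 16 → ZMod 2) (a b : Fin 16) :
    alpha16 a + alpha16 b ∈ extendedLattice c :=
  Submodule.subset_span (Or.inl (Or.inl ⟨a, b, rfl⟩))

lemma mem_halfAll (c : Fin 16 → ZMod 2) :
    (2 : ℝ)⁻¹ • ∑ i, alpha16 i ∈ extendedLattice c :=
  Submodule.subset_span (Or.inl (Or.inr rfl))

lemma mem_halfWord (c : Fin 16 → ZMod 2) :
    (2 : ℝ)⁻¹ • alphaWord c ∈ extendedLattice c :=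
  Submodule.subset_span (Or.inr rfl)

/-- The candidate vectors: scaled E₈ simple roots in the coordinates `f 0, …, f 7`. -/
noncomputable def bvec (f : Fin 8 → Fin 16) (k : Fin 8) : Fin 16 → ℝ :=
  ∑ i, ((Vmat k i : ℝ) / 2) • alpha16 (f i)

lemma bvec_mem (c : Fin 16 → ZMod 2) (f : Fin 8 → Fin 16)
    (hhalf : (2 : ℝ)⁻¹ • ∑ i, alpha16 (f i) ∈ extendedLattice c) (k : Fin 8) :
    bvec f k ∈ extendedLattice c := by
  fin_cases k
  · show bvec f 0 ∈ extendedLattice c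
    have hk : bvec f 0 = ((2 : ℝ)⁻¹ • ∑ i : Fin 8, alpha16 (f i)) - (alpha16 (f 1) + alpha16 (f 2)) - (alpha16 (f 3) + alpha16 (f 4)) - (alpha16 (f 5) + alpha16 (f 6)) := by
      unfold bvec
      rw [Fin.sum_univ_eight, Fin.sum_univ_eight]
      simp only [show Vmat 0 0 = 1 from rfl, show Vmat 0 1 = -1 from rfl, show Vmat 0 2 = -1 from rfl, show Vmat 0 3 = -1 from rfl, show Vmat 0 4 = -1 from rfl, show Vmat 0 5 = -1 from rfl, show Vmat 0 6 = -1 from rfl, show Vmat 0 7 = 1 from rfl]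
      push_cast
      module
    rw [hk]
    exact sub_mem (sub_mem (sub_mem hhalf (mem_pair c _ _)) (mem_pair c _ _)) (mem_pair c _ _)
  · show bvec f 1 ∈ extendedLattice c
    have hk : bvec f 1 = alpha16 (f 0) + alpha16 (f 1) := by
      unfold bvec
      rw [Fin.sum_univ_eight]
      simp only [show Vmat 1 0 = 2 from rfl, show Vmat 1 1 = 2 from rfl, show Vmat 1 2 = 0 from rfl, show Vmat 1 3 = 0 from rfl, show Vmat 1 4 = 0 from rfl, show Vmat 1 5 = 0 from rfl, show Vmat 1 6 = 0 from rfl, show Vmat 1 7 = 0 from rfl]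
      push_cast
      module
    rw [hk]
    exact mem_pair c _ _
  · show bvec f 2 ∈ extendedLattice c
    have hk : bvec f 2 = (alpha16 (f 1) + alpha16 (f 0)) - (alpha16 (f 0) + alpha16 (f 0)) := by
      unfold bvec
      rw [Fin.sum_univ_eight]
      simp only [show Vmat 2 0 = -2 from rfl, show Vmat 2 1 = 2 from rfl, show Vmat 2 2 = 0 from rfl, show Vmat 2 3 = 0 from rfl, show Vmat 2 4 = 0 from rfl, show Vmat 2 5 = 0 from rfl, show Vmat 2 6 = 0 from rfl, show Vmat 2 7 = 0 from rfl]
      push_cast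
      module
    rw [hk]
    exact sub_mem (mem_pair c _ _) (mem_pair c _ _)
  · show bvec f 3 ∈ extendedLattice c
    have hk : bvec f 3 = (alpha16 (f 2) + alpha16 (f 1)) - (alpha16 (f 1) + alpha16 (f 1)) := by
      unfold bvec
      rw [Fin.sum_univ_eight]
      simp only [show Vmat 3 0 = 0 from rfl, show Vmat 3 1 = -2 from rfl, show Vmat 3 2 = 2 from rfl, show Vmat 3 3 = 0 from rfl, show Vmat 3 4 = 0 from rfl, show Vmat 3 5 = 0 from rfl, show Vmat 3 6 = 0 from rfl, show Vmat 3 7 = 0 from rfl]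
      push_cast
      module
    rw [hk]
    exact sub_mem (mem_pair c _ _) (mem_pair c _ _)
  · show bvec f 4 ∈ extendedLattice c
    have hk : bvec f 4 = (alpha16 (f 3) + alpha16 (f 2)) - (alpha16 (f 2) + alpha16 (f 2)) := by
      unfold bvec
      rw [Fin.sum_univ_eight]
      simp only [show Vmat 4 0 = 0 from rfl, show Vmat 4 1 = 0 from rfl, show Vmat 4 2 = -2 from rfl, show Vmat 4 3 = 2 from rfl, show Vmat 4 4 = 0 from rfl, show Vmat 4 5 = 0 from rfl, show Vmat 4 6 = 0 from rfl, show Vmat 4 7 = 0 from rfl]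
      push_cast
      module
    rw [hk]
    exact sub_mem (mem_pair c _ _) (mem_pair c _ _)
  · show bvec f 5 ∈ extendedLattice c
    have hk : bvec f 5 = (alpha16 (f 4) + alpha16 (f 3)) - (alpha16 (f 3) + alpha16 (f 3)) := by
      unfold bvec
      rw [Fin.sum_univ_eight]
      simp only [show Vmat 5 0 = 0 from rfl, show Vmat 5 1 = 0 from rfl, show Vmat 5 2 = 0 from rfl, show Vmat 5 3 = -2 from rfl, show Vmat 5 4 = 2 from rfl, show Vmat 5 5 = 0 from rfl, show Vmat 5 6 = 0 from rfl, show Vmat 5 7 = 0 from rfl]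
      push_cast
      module
    rw [hk]
    exact sub_mem (mem_pair c _ _) (mem_pair c _ _)
  · show bvec f 6 ∈ extendedLattice c
    have hk : bvec f 6 = (alpha16 (f 5) + alpha16 (f 4)) - (alpha16 (f 4) + alpha16 (f 4)) := by
      unfold bvec
      rw [Fin.sum_univ_eight]
      simp only [show Vmat 6 0 = 0 from rfl, show Vmat 6 1 = 0 from rfl, show Vmat 6 2 = 0 from rfl, show Vmat 6 3 = 0 from rfl, show Vmat 6 4 = -2 from rfl, show Vmat 6 5 = 2 from rfl, show Vmat 6 6 = 0 from rfl, show Vmat 6 7 = 0 from rfl]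
      push_cast
      module
    rw [hk]
    exact sub_mem (mem_pair c _ _) (mem_pair c _ _)
  · show bvec f 7 ∈ extendedLattice c
    have hk : bvec f 7 = (alpha16 (f 6) + alpha16 (f 5)) - (alpha16 (f 5) + alpha16 (f 5)) := by
      unfold bvec
      rw [Fin.sum_univ_eight]
      simp only [show Vmat 7 0 = 0 from rfl, show Vmat 7 1 = 0 from rfl, show Vmat 7 2 = 0 from rfl, show Vmat 7 3 = 0 from rfl, show Vmat 7 4 = 0 from rfl, show Vmat 7 5 = -2 from rfl, show Vmat 7 6 = 2 from rfl, show Vmat 7 7 = 0 from rfl]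
      push_cast
      module
    rw [hk]
    exact sub_mem (mem_pair c _ _) (mem_pair c _ _)

lemma bvec_dot_self (f : Fin 8 → Fin 16) (hf : Function.Injective f) (k l : Fin 8) :
    dot16 (bvec f k) (bvec f l) = 2 * ((CartanMatrix.E₈ k l : ℤ) : ℝ) := by
  unfold bvec
  rw [dot16_combo]
  simp only [hf.eq_iff]
  rw [show (2:ℝ) * ((CartanMatrix.E₈ k l : ℤ) : ℝ) = ((∑ i, Vmat k i * Vmat l i : ℤ) : ℝ)/2 by
    rw [Vmat_gram k l]; push_cast; ring]
  push_cast
  rw [Finset.sum_div]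
  refine Finset.sum_congr rfl fun i _ => ?_
  rw [Finset.sum_eq_single i]
  · rw [if_pos rfl]; ring
  · intro j _ hj; simp [Ne.symm hj]
  · simp

lemma bvec_dot_disj (f g : Fin 8 → Fin 16) (hfg : ∀ i j, f i ≠ g j) (k l : Fin 8) :
    dot16 (bvec f k) (bvec g l) = 0 := by
  unfold bvec
  rw [dot16_combo]
  refine Finset.sum_eq_zero fun i _ => Finset.sum_eq_zero fun j _ => ?_
  simp [hfg i j]

lemma alphaWord_eq_sum (c : Fin 16 → ZMod 2) :
    alphaWord c = ∑ j ∈ Finset.univ.filter (fun i => c i ≠ 0), alpha16 j := by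
  have h : ∀ a : ZMod 2, a ≠ 0 ↔ a = 1 := by decide
  unfold alphaWord
  rw [Finset.sum_filter]
  congr 1
  ext i
  simp [h]

lemma sum_orderEmb (s : Finset (Fin 16)) (h : s.card = 8) :
    ∑ i : Fin 8, alpha16 (s.orderEmbOfFin h i) = ∑ j ∈ s, alpha16 j := by
  rw [← Finset.sum_attach s alpha16]
  exact Fintype.sum_equiv (s.orderIsoOfFin h).toEquiv _ _
    (fun i => congrArg alpha16 (Finset.coe_orderIsoOfFin_apply s h i).symm)

/-- If wt(c) = 8, then √2 D₁₆⁺ + ℤ(α_c/2) contains a sublattice isometric to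
√2 E₈ ⊕ √2 E₈: sixteen lattice vectors whose Gram matrix is the orthogonal block sum of
two copies of twice the E₈ Gram matrix. -/
theorem extendedLattice_contains_sqrt2E8_sqrt2E8 (c : Fin 16 → ZMod 2) (hc : wt c = 8) :
    ∃ b b' : Fin 8 → (Fin 16 → ℝ),
      (∀ i, b i ∈ extendedLattice c) ∧ (∀ i, b' i ∈ extendedLattice c) ∧
      (∀ i j, dot16 (b i) (b j) = 2 * ((CartanMatrix.E₈ i j : ℤ) : ℝ)) ∧
      (∀ i j, dot16 (b' i) (b' j) = 2 * ((CartanMatrix.E₈ i j : ℤ) : ℝ)) ∧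
      (∀ i j, dot16 (b i) (b' j) = 0) := by
  set S : Finset (Fin 16) := Finset.univ.filter (fun i => c i ≠ 0) with hS
  have hcardS : S.card = 8 := hc
  have hcardSc : Sᶜ.card = 8 := by
    rw [Finset.card_compl, hcardS]
    rfl
  set e : Fin 8 → Fin 16 := ⇑(S.orderEmbOfFin hcardS) with he
  set e' : Fin 8 → Fin 16 := ⇑(Sᶜ.orderEmbOfFin hcardSc) with he'
  have hinj : Function.Injective e := (S.orderEmbOfFin hcardS).injective
  have hinj' : Function.Injective e' := (Sᶜ.orderEmbOfFin hcardSc).injective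
  have hdisj : ∀ i j, e i ≠ e' j := by
    intro i j hEq
    have h1 : e i ∈ S := Finset.orderEmbOfFin_mem S hcardS i
    have h2 : e' j ∈ Sᶜ := Finset.orderEmbOfFin_mem Sᶜ hcardSc j
    rw [Finset.mem_compl] at h2
    exact h2 (hEq ▸ h1)
  have hhalfS : (2 : ℝ)⁻¹ • ∑ i, alpha16 (e i) ∈ extendedLattice c := by
    rw [sum_orderEmb S hcardS, ← alphaWord_eq_sum]
    exact mem_halfWord c
  have hhalfSc : (2 : ℝ)⁻¹ • ∑ i, alpha16 (e' i) ∈ extendedLattice c := by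
    rw [sum_orderEmb Sᶜ hcardSc]
    have hsplit : ∑ j ∈ Sᶜ, alpha16 j = (∑ j, alpha16 j) - ∑ j ∈ S, alpha16 j := by
      rw [eq_sub_iff_add_eq, Finset.sum_compl_add_sum]
    rw [hsplit, smul_sub, ← alphaWord_eq_sum]
    exact sub_mem (mem_halfAll c) (mem_halfWord c)
  refine ⟨bvec e, bvec e', fun k => bvec_mem c e hhalfS k, fun k => bvec_mem c e' hhalfSc k,
    bvec_dot_self e hinj, bvec_dot_self e' hinj', bvec_dot_disj e e' hdisj⟩
end
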